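/- arXiv:2404.02538 — 2 statements merged into one kernel-verified Lean document; each statement's English description precedes it below -/
import Mathlib

section
/- For every t ∈ [0,1) and every x ∈ ℝ^d, the function log φ_t is twice differentiable at x and its Hessian satisfies ∇²_x log φ_t(x) = −(1/(1−t²)) I_d + (t²/(1−t²)²) Cov_t(x). -/
/-!
Differentiating under the integral sign, which is legitimate because `π₁` has bounded support,
gives `∇ₓ g_t(x, x₁) = (1 - t²)⁻¹ g_t(x, x₁) (t x₁ - x)` and hence
`∇ log φ_t = (1 - t²)⁻¹ (t m_t - x)`. The Hessian is then `(1 - t²)⁻¹ (t Dm_t - I)`, and the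
quotient rule for `m_t = (∫ g_t x₁ dπ₁) / φ_t`, together with the same formula for `∇ₓ g_t`,
gives `Dm_t = t (1 - t²)⁻¹ Cov_t`.
-/

open MeasureTheory

/-- The Gaussian kernel `g_t(x, x₁) = exp(-‖x - t x₁‖² / (2(1-t²)))`. -/
noncomputable def gKer (d : ℕ) (t : ℝ) (x x₁ : EuclideanSpace ℝ (Fin d)) : ℝ :=
  Real.exp (-‖x - t • x₁‖ ^ 2 / (2 * (1 - t ^ 2)))

/-- `φ_t(x) = ∫ g_t(x, x₁) dπ₁(x₁)`. -/
noncomputable def phiFn (d : ℕ) (π₁ : MeasureTheory.Measure (EuclideanSpace ℝ (Fin d))) (t : ℝ)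
    (x : EuclideanSpace ℝ (Fin d)) : ℝ :=
  ∫ x₁, gKer d t x x₁ ∂π₁

/-- `m_t(x) = φ_t(x)⁻¹ ∫ x₁ g_t(x, x₁) dπ₁(x₁)`. -/
noncomputable def mFn (d : ℕ) (π₁ : MeasureTheory.Measure (EuclideanSpace ℝ (Fin d))) (t : ℝ)
    (x : EuclideanSpace ℝ (Fin d)) : EuclideanSpace ℝ (Fin d) :=
  (phiFn d π₁ t x)⁻¹ • ∫ x₁, gKer d t x x₁ • x₁ ∂π₁

/-- The velocity field `v*(x, t) = (1/(1-t²)) m_t(x) - (t/(1-t²)) x`. -/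
noncomputable def vStar (d : ℕ) (π₁ : MeasureTheory.Measure (EuclideanSpace ℝ (Fin d)))
    (x : EuclideanSpace ℝ (Fin d)) (t : ℝ) : EuclideanSpace ℝ (Fin d) :=
  (1 / (1 - t ^ 2)) • mFn d π₁ t x - (t / (1 - t ^ 2)) • x

/-- `M_t(x) = φ_t(x)⁻¹ ∫ x₁ x₁ᵀ g_t(x, x₁) dπ₁(x₁)` as a `d × d` matrix. -/
noncomputable def MMat (d : ℕ) (π₁ : MeasureTheory.Measure (EuclideanSpace ℝ (Fin d))) (t : ℝ)
    (x : EuclideanSpace ℝ (Fin d)) : Matrix (Fin d) (Fin d) ℝ :=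
  Matrix.of fun i j => (phiFn d π₁ t x)⁻¹ * ∫ x₁, gKer d t x x₁ * (x₁ i * x₁ j) ∂π₁

/-- The conditional covariance `Cov_t(x) = M_t(x) - m_t(x) m_t(x)ᵀ`. -/
noncomputable def covMat (d : ℕ) (π₁ : MeasureTheory.Measure (EuclideanSpace ℝ (Fin d))) (t : ℝ)
    (x : EuclideanSpace ℝ (Fin d)) : Matrix (Fin d) (Fin d) ℝ :=
  MMat d π₁ t x - Matrix.of fun i j => mFn d π₁ t x i * mFn d π₁ t x j

lemma EuclideanSpace.norm_le_sqrt_card {ι : Type*} [Fintype ι] {x : EuclideanSpace ℝ ι}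
    (hx : ∀ i, ‖x i‖ ≤ 1) : ‖x‖ ≤ √(Fintype.card ι) := by
  rw [EuclideanSpace.norm_eq]
  gcongr
  calc ∑ i, ‖x i‖ ^ 2 ≤ ∑ _i : ι, (1 : ℝ) := by
        gcongr with i; exact pow_le_one₀ (norm_nonneg _) (hx i)
    _ = Fintype.card ι := by simp

noncomputable def gKerGrad (d : ℕ) (t : ℝ) (y x₁ : EuclideanSpace ℝ (Fin d)) :
    EuclideanSpace ℝ (Fin d) :=
  ((1 - t ^ 2)⁻¹ * gKer d t y x₁) • (t • x₁ - y)

section Kernel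

variable {d : ℕ} {t : ℝ}

lemma gKer_pos (y x₁ : EuclideanSpace ℝ (Fin d)) : 0 < gKer d t y x₁ := Real.exp_pos _

lemma hasFDerivAt_gKer (x₁ y : EuclideanSpace ℝ (Fin d)) :
    HasFDerivAt (gKer d t · x₁) (innerSL ℝ (gKerGrad d t y x₁)) y := by
  have hfun : (gKer d t · x₁) = fun z => Real.exp (-(2 * (1 - t ^ 2))⁻¹ * ‖z - t • x₁‖ ^ 2) := by
    funext z; rw [gKer]; ring_nf
  rw [hfun]
  refine ((((hasFDerivAt_id y).sub_const (t • x₁)).norm_sq.const_mul _).exp).congr_fderiv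
    (ContinuousLinearMap.ext fun v => ?_)
  simp only [gKerGrad, ← congrFun hfun y, smul_apply, innerSL_apply_apply,
    ContinuousLinearMap.comp_apply, ContinuousLinearMap.id_apply, id, smul_eq_mul,
    real_inner_smul_left, inner_sub_left, nsmul_eq_mul]
  rw [real_inner_comm v, real_inner_comm v, mul_inv]
  ring

lemma gKer_le_one (hs : 0 < 1 - t ^ 2) (y x₁ : EuclideanSpace ℝ (Fin d)) :
    gKer d t y x₁ ≤ 1 :=
  Real.exp_le_one_iff.2 (div_nonpos_of_nonpos_of_nonneg (by simp) (by positivity))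

lemma continuous_gKer (y : EuclideanSpace ℝ (Fin d)) : Continuous (gKer d t y) := by
  unfold gKer; fun_prop

lemma continuous_gKerGrad (y : EuclideanSpace ℝ (Fin d)) : Continuous (gKerGrad d t y) := by
  unfold gKerGrad; have := continuous_gKer (t := t) y; fun_prop

lemma norm_gKerGrad_le (hs : 0 < 1 - t ^ 2) (y x₁ : EuclideanSpace ℝ (Fin d)) :
    ‖gKerGrad d t y x₁‖ ≤ (1 - t ^ 2)⁻¹ * (|t| * ‖x₁‖ + ‖y‖) := by
  have hg := gKer_pos (t := t) y x₁
  rw [gKerGrad, norm_smul, Real.norm_of_nonneg (by positivity), mul_assoc]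
  gcongr
  calc gKer d t y x₁ * ‖t • x₁ - y‖ ≤ 1 * ‖t • x₁ - y‖ := by gcongr; exact gKer_le_one hs y x₁
    _ ≤ |t| * ‖x₁‖ + ‖y‖ := by rw [one_mul, ← Real.norm_eq_abs, ← norm_smul]; exact norm_sub_le _ _

end Kernel

noncomputable def unnormMean (d : ℕ) (π₁ : Measure (EuclideanSpace ℝ (Fin d))) (t : ℝ)
    (y : EuclideanSpace ℝ (Fin d)) : EuclideanSpace ℝ (Fin d) :=
  ∫ x₁, gKer d t y x₁ • x₁ ∂π₁

lemma mFn_eq_smul_unnormMean {d : ℕ} (π₁ : Measure (EuclideanSpace ℝ (Fin d))) (t : ℝ)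
    (y : EuclideanSpace ℝ (Fin d)) :
    mFn d π₁ t y = (phiFn d π₁ t y)⁻¹ • unnormMean d π₁ t y := rfl

section Moments

variable {d : ℕ} {t : ℝ} {π₁ : Measure (EuclideanSpace ℝ (Fin d))}
  {F : Type*} [NormedAddCommGroup F] [NormedSpace ℝ F] {f : EuclideanSpace ℝ (Fin d) → F}
  {C R : ℝ}

lemma norm_gKerGrad_smulRight_le (hs : 0 < 1 - t ^ 2) {z x₁ : EuclideanSpace ℝ (Fin d)} {w : F}
    {r : ℝ} (hx₁ : ‖x₁‖ ≤ R) (hz : ‖z‖ ≤ r) (hw : ‖w‖ ≤ C) :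
    ‖(innerSL ℝ (gKerGrad d t z x₁)).smulRight w‖ ≤ (1 - t ^ 2)⁻¹ * (|t| * R + r) * C := by
  rw [ContinuousLinearMap.norm_smulRight_apply, innerSL_apply_norm]
  have hgrad : ‖gKerGrad d t z x₁‖ ≤ (1 - t ^ 2)⁻¹ * (|t| * R + r) :=
    (norm_gKerGrad_le hs z x₁).trans (by have := inv_pos.2 hs; gcongr)
  exact mul_le_mul hgrad hw (norm_nonneg _) ((norm_nonneg _).trans hgrad)

lemma aestronglyMeasurable_gKerGrad_smulRight (hf : AEStronglyMeasurable f π₁)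
    (y : EuclideanSpace ℝ (Fin d)) :
    AEStronglyMeasurable (fun x₁ => (innerSL ℝ (gKerGrad d t y x₁)).smulRight (f x₁)) π₁ :=
  (ContinuousLinearMap.smulRightL ℝ (EuclideanSpace ℝ (Fin d)) F).continuous₂
    |>.comp_aestronglyMeasurable₂
      ((innerSL ℝ).continuous.comp (continuous_gKerGrad y)).aestronglyMeasurable hf

variable [IsFiniteMeasure π₁]

lemma integrable_gKerGrad_smulRight (hs : 0 < 1 - t ^ 2) (hR : ∀ᵐ x₁ ∂π₁, ‖x₁‖ ≤ R)
    (hf : AEStronglyMeasurable f π₁) (hfC : ∀ᵐ x₁ ∂π₁, ‖f x₁‖ ≤ C)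
    (y : EuclideanSpace ℝ (Fin d)) :
    Integrable (fun x₁ => (innerSL ℝ (gKerGrad d t y x₁)).smulRight (f x₁)) π₁ :=
  (integrable_const _).mono' (aestronglyMeasurable_gKerGrad_smulRight hf y) <| by
    filter_upwards [hR, hfC] with x₁ hx₁ hfx₁
    exact norm_gKerGrad_smulRight_le hs hx₁ le_rfl hfx₁

lemma integrable_gKerGrad (hs : 0 < 1 - t ^ 2) (hR : ∀ᵐ x₁ ∂π₁, ‖x₁‖ ≤ R)
    (y : EuclideanSpace ℝ (Fin d)) :
    Integrable (gKerGrad d t y) π₁ := by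
  refine (integrable_const ((1 - t ^ 2)⁻¹ * (|t| * R + ‖y‖))).mono'
    (continuous_gKerGrad y).aestronglyMeasurable ?_
  filter_upwards [hR] with x₁ hx₁
  refine (norm_gKerGrad_le hs y x₁).trans ?_
  have := inv_pos.2 hs
  gcongr

lemma integrable_gKer_smul (hs : 0 < 1 - t ^ 2)
    (hf : AEStronglyMeasurable f π₁) (hfC : ∀ᵐ x₁ ∂π₁, ‖f x₁‖ ≤ C)
    (y : EuclideanSpace ℝ (Fin d)) :
    Integrable (fun x₁ => gKer d t y x₁ • f x₁) π₁ := by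
  refine (integrable_const C).mono' ((continuous_gKer y).aestronglyMeasurable.smul hf) ?_
  filter_upwards [hfC] with x₁ hx₁
  rw [norm_smul, Real.norm_of_nonneg (gKer_pos y x₁).le]
  exact (mul_le_of_le_one_left (norm_nonneg _) (gKer_le_one hs y x₁)).trans hx₁

lemma hasFDerivAt_integral_gKer_smul [CompleteSpace F] (hs : 0 < 1 - t ^ 2)
    (hR : ∀ᵐ x₁ ∂π₁, ‖x₁‖ ≤ R) (hf : AEStronglyMeasurable f π₁)
    (hfC : ∀ᵐ x₁ ∂π₁, ‖f x₁‖ ≤ C) (y : EuclideanSpace ℝ (Fin d)) :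
    HasFDerivAt (fun z => ∫ x₁, gKer d t z x₁ • f x₁ ∂π₁)
      (∫ x₁, (innerSL ℝ (gKerGrad d t y x₁)).smulRight (f x₁) ∂π₁) y := by
  refine hasFDerivAt_integral_of_dominated_of_fderiv_le (Metric.ball_mem_nhds y one_pos)
    (.of_forall fun z => (continuous_gKer z).aestronglyMeasurable.smul hf)
    (integrable_gKer_smul hs hf hfC y) (aestronglyMeasurable_gKerGrad_smulRight hf y) ?_
    (integrable_const ((1 - t ^ 2)⁻¹ * (|t| * R + (‖y‖ + 1)) * C))
    (.of_forall fun x₁ z _ => (hasFDerivAt_gKer x₁ z).smul_const (f x₁))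
  filter_upwards [hR, hfC] with x₁ hx₁ hfx₁ z hz
  exact norm_gKerGrad_smulRight_le hs hx₁
    (norm_le_norm_add_const_of_dist_le (Metric.mem_ball.1 hz).le) hfx₁

lemma integral_gKerGrad (hs : 0 < 1 - t ^ 2) (hR : ∀ᵐ x₁ ∂π₁, ‖x₁‖ ≤ R)
    (y : EuclideanSpace ℝ (Fin d)) :
    ∫ x₁, gKerGrad d t y x₁ ∂π₁
      = (1 - t ^ 2)⁻¹ • (t • unnormMean d π₁ t y - phiFn d π₁ t y • y) := by
  have hmean : Integrable (fun x₁ => gKer d t y x₁ • x₁) π₁ :=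
    integrable_gKer_smul hs aestronglyMeasurable_id hR y
  have hconst := integrable_gKer_smul (π₁ := π₁) (f := fun _ => y) hs aestronglyMeasurable_const
    (.of_forall fun _ => le_rfl) y
  have hpt : ∀ x₁, gKerGrad d t y x₁
      = (1 - t ^ 2)⁻¹ • (t • (gKer d t y x₁ • x₁) - gKer d t y x₁ • y) := fun x₁ => by
    rw [gKerGrad]; module
  simp_rw [hpt]
  rw [integral_smul, integral_sub (hmean.fun_smul t) hconst, integral_smul, integral_smul_const]
  rfl

lemma hasFDerivAt_phiFn (hs : 0 < 1 - t ^ 2) (hR : ∀ᵐ x₁ ∂π₁, ‖x₁‖ ≤ R)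
    (y : EuclideanSpace ℝ (Fin d)) :
    HasFDerivAt (phiFn d π₁ t)
      (innerSL ℝ ((1 - t ^ 2)⁻¹ • (t • unnormMean d π₁ t y - phiFn d π₁ t y • y))) y := by
  have hone : ∀ᵐ x₁ ∂π₁, ‖(fun _ => (1 : ℝ)) x₁‖ ≤ 1 := .of_forall fun _ => by simp
  have h := hasFDerivAt_integral_gKer_smul hs hR aestronglyMeasurable_const hone y
  simp only [smul_eq_mul, mul_one] at h
  refine h.congr_fderiv (ContinuousLinearMap.ext fun v => ?_)
  rw [← integral_gKerGrad hs hR, ContinuousLinearMap.integral_apply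
      (integrable_gKerGrad_smulRight hs hR aestronglyMeasurable_const hone y),
    innerSL_apply_apply, real_inner_comm, ← integral_inner (integrable_gKerGrad hs hR y)]
  simp [real_inner_comm]

lemma hasFDerivAt_unnormMean (hs : 0 < 1 - t ^ 2) (hR : ∀ᵐ x₁ ∂π₁, ‖x₁‖ ≤ R)
    (y : EuclideanSpace ℝ (Fin d)) :
    HasFDerivAt (unnormMean d π₁ t)
      (∫ x₁, (innerSL ℝ (gKerGrad d t y x₁)).smulRight x₁ ∂π₁) y :=
  hasFDerivAt_integral_gKer_smul hs hR aestronglyMeasurable_id hR y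

end Moments

section Posterior

variable {d : ℕ} {t : ℝ} {π₁ : Measure (EuclideanSpace ℝ (Fin d))} [IsFiniteMeasure π₁]
  {R : ℝ}

lemma phiFn_pos [NeZero π₁] (hs : 0 < 1 - t ^ 2) (y : EuclideanSpace ℝ (Fin d)) :
    0 < phiFn d π₁ t y := by
  have h : Integrable (gKer d t y) π₁ := by
    simpa using integrable_gKer_smul (π₁ := π₁) (f := fun _ => (1 : ℝ)) (C := 1) hs
      aestronglyMeasurable_const (.of_forall fun _ => by simp) y
  exact integral_exp_pos h

lemma hasFDerivAt_log_phiFn [NeZero π₁] (hs : 0 < 1 - t ^ 2) (hR : ∀ᵐ x₁ ∂π₁, ‖x₁‖ ≤ R)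
    (y : EuclideanSpace ℝ (Fin d)) :
    HasFDerivAt (fun z => Real.log (phiFn d π₁ t z))
      (innerSL ℝ ((1 - t ^ 2)⁻¹ • (t • mFn d π₁ t y - y))) y := by
  have hφ := phiFn_pos (π₁ := π₁) hs y
  refine ((hasFDerivAt_phiFn hs hR y).log hφ.ne').congr_fderiv
    (ContinuousLinearMap.ext fun v => ?_)
  simp only [mFn_eq_smul_unnormMean, smul_apply, innerSL_apply_apply,
    real_inner_smul_left, inner_sub_left, smul_eq_mul]
  field_simp

lemma hasFDerivAt_mFn [NeZero π₁] (hs : 0 < 1 - t ^ 2) (hR : ∀ᵐ x₁ ∂π₁, ‖x₁‖ ≤ R)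
    (y : EuclideanSpace ℝ (Fin d)) :
    HasFDerivAt (mFn d π₁ t)
      ((phiFn d π₁ t y)⁻¹ • fderiv ℝ (unnormMean d π₁ t) y
        + (-(phiFn d π₁ t y ^ 2)⁻¹ • fderiv ℝ (phiFn d π₁ t) y).smulRight
            (unnormMean d π₁ t y)) y :=
  ((hasDerivAt_inv (phiFn_pos hs y).ne').comp_hasFDerivAt y
    (hasFDerivAt_phiFn hs hR y).differentiableAt.hasFDerivAt).smul
      (hasFDerivAt_unnormMean hs hR y).differentiableAt.hasFDerivAt

lemma fderiv_unnormMean_single_apply (hs : 0 < 1 - t ^ 2) (hR : ∀ᵐ x₁ ∂π₁, ‖x₁‖ ≤ R)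
    (y : EuclideanSpace ℝ (Fin d)) (i j : Fin d) :
    fderiv ℝ (unnormMean d π₁ t) y (EuclideanSpace.single i 1) j
      = (1 - t ^ 2)⁻¹ * (t * ∫ x₁, gKer d t y x₁ * (x₁ i * x₁ j) ∂π₁
          - y i * unnormMean d π₁ t y j) := by
  have hint : Integrable (fun x₁ => (innerSL ℝ (gKerGrad d t y x₁)).smulRight x₁) π₁ :=
    integrable_gKerGrad_smulRight hs hR aestronglyMeasurable_id hR y
  rw [(hasFDerivAt_unnormMean hs hR y).fderiv, ContinuousLinearMap.integral_apply hint,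
    eval_integral_piLp (hint.apply_continuousLinearMap _).eval_piLp]
  have hmean : Integrable (fun x₁ => gKer d t y x₁ • x₁) π₁ :=
    integrable_gKer_smul hs aestronglyMeasurable_id hR y
  have hprod : Integrable (fun x₁ => gKer d t y x₁ * (x₁ i * x₁ j)) π₁ := by
    have hmeas := (EuclideanSpace.proj (𝕜 := ℝ) i).continuous.mul
      (EuclideanSpace.proj (𝕜 := ℝ) j).continuous
    refine integrable_gKer_smul (f := fun x₁ => x₁ i * x₁ j) (C := R * R) hs
      hmeas.aestronglyMeasurable ?_ y
    filter_upwards [hR] with x₁ hx₁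
    rw [norm_mul]
    exact mul_le_mul ((PiLp.norm_apply_le x₁ i).trans hx₁) ((PiLp.norm_apply_le x₁ j).trans hx₁)
      (norm_nonneg _) ((norm_nonneg _).trans hx₁)
  rw [unnormMean, eval_integral_piLp hmean.eval_piLp, ← integral_const_mul, ← integral_const_mul,
    ← integral_sub (hprod.const_mul t) ((hmean.eval_piLp j).const_mul (y i)), ← integral_const_mul]
  congr 1 with x₁
  simp only [ContinuousLinearMap.smulRight_apply, innerSL_apply_apply, gKerGrad,
    EuclideanSpace.inner_single_right, PiLp.smul_apply, PiLp.sub_apply, smul_eq_mul,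
    conj_trivial]
  ring

lemma fderiv_mFn_single_apply [NeZero π₁] (hs : 0 < 1 - t ^ 2) (hR : ∀ᵐ x₁ ∂π₁, ‖x₁‖ ≤ R)
    (y : EuclideanSpace ℝ (Fin d)) (i j : Fin d) :
    fderiv ℝ (mFn d π₁ t) y (EuclideanSpace.single i 1) j
      = t / (1 - t ^ 2) * covMat d π₁ t y i j := by
  have hφ := (phiFn_pos (π₁ := π₁) hs y).ne'
  rw [(hasFDerivAt_mFn hs hR y).fderiv]
  simp only [add_apply, smul_apply, ContinuousLinearMap.smulRight_apply, PiLp.add_apply,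
    PiLp.smul_apply, smul_eq_mul,
    fderiv_unnormMean_single_apply hs hR, (hasFDerivAt_phiFn hs hR y).fderiv,
    innerSL_apply_apply, EuclideanSpace.inner_single_right, conj_trivial, PiLp.sub_apply,
    covMat, MMat, mFn_eq_smul_unnormMean, Matrix.sub_apply, Matrix.of_apply]
  field_simp
  ring

end Posterior

theorem hessian_log_phi_general
    (d : ℕ)
    (π₁ : Measure (EuclideanSpace ℝ (Fin d))) [IsProbabilityMeasure π₁]
    (hsupp : ∀ᵐ x₁ ∂π₁, ∀ i, x₁ i ∈ Set.Icc (0 : ℝ) 1)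
    (t : ℝ) (ht : t ∈ Set.Ico (0 : ℝ) 1) (x : EuclideanSpace ℝ (Fin d)) :
    DifferentiableAt ℝ (fun y => Real.log (phiFn d π₁ t y)) x ∧
    DifferentiableAt ℝ (fun y => fderiv ℝ (fun z => Real.log (phiFn d π₁ t z)) y) x ∧
    ∀ i j : Fin d,
      fderiv ℝ (fun y => fderiv ℝ (fun z => Real.log (phiFn d π₁ t z)) y) x
          (EuclideanSpace.single i 1) (EuclideanSpace.single j 1)
        = ((-(1 / (1 - t ^ 2))) • (1 : Matrix (Fin d) (Fin d) ℝ)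
            + (t ^ 2 / (1 - t ^ 2) ^ 2) • covMat d π₁ t x) i j := by
  have hs : 0 < 1 - t ^ 2 := by nlinarith [ht.1, ht.2]
  have hR : ∀ᵐ x₁ ∂π₁, ‖x₁‖ ≤ √(d : ℝ) := hsupp.mono fun x₁ hx₁ => by
    simpa using EuclideanSpace.norm_le_sqrt_card fun i =>
      (Real.norm_of_nonneg (hx₁ i).1).trans_le (hx₁ i).2
  have hgrad : fderiv ℝ (fun z => Real.log (phiFn d π₁ t z))
      = fun y => innerSL ℝ ((1 - t ^ 2)⁻¹ • (t • mFn d π₁ t y - y)) :=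
    funext fun y => (hasFDerivAt_log_phiFn hs hR y).fderiv
  have hm := (hasFDerivAt_mFn hs hR x).differentiableAt.hasFDerivAt
  have hhess : HasFDerivAt (fun y => innerSL ℝ ((1 - t ^ 2)⁻¹ • (t • mFn d π₁ t y - y)))
      ((innerSL ℝ).comp ((1 - t ^ 2)⁻¹ • (t • fderiv ℝ (mFn d π₁ t) x
        - ContinuousLinearMap.id ℝ _))) x :=
    (innerSL ℝ).hasFDerivAt.comp x
      (((hm.fun_const_smul t).fun_sub (hasFDerivAt_id x)).fun_const_smul _)
  refine ⟨(hasFDerivAt_log_phiFn hs hR x).differentiableAt, ?_, fun i j => ?_⟩ <;> rw [hgrad]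
  · exact hhess.differentiableAt
  rw [hhess.fderiv]
  simp only [ContinuousLinearMap.comp_apply, smul_apply, sub_apply, ContinuousLinearMap.id_apply,
    innerSL_apply_apply, EuclideanSpace.inner_single_right, PiLp.smul_apply, PiLp.sub_apply,
    fderiv_mFn_single_apply hs hR, PiLp.single_apply, Matrix.add_apply, Matrix.smul_apply,
    Matrix.one_apply, smul_eq_mul, conj_trivial, one_mul, eq_comm]
  split_ifs <;> field_simp <;> ring

/-- For every `t ∈ [0,1)` and every `x`, `log φ_t` is twice differentiable at `x` and its
Hessian is `∇²ₓ log φ_t(x) = -(1/(1-t²)) I_d + (t²/(1-t²)²) Cov_t(x)`. -/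
theorem hessian_log_phi
    (d : ℕ) (hd : 1 ≤ d)
    (π₁ : Measure (EuclideanSpace ℝ (Fin d))) [IsProbabilityMeasure π₁]
    (hsupp : ∀ᵐ x₁ ∂π₁, ∀ i, x₁ i ∈ Set.Icc (0 : ℝ) 1)
    (t : ℝ) (ht : t ∈ Set.Ico (0 : ℝ) 1) (x : EuclideanSpace ℝ (Fin d)) :
    DifferentiableAt ℝ (fun y => Real.log (phiFn d π₁ t y)) x ∧
    DifferentiableAt ℝ (fun y => fderiv ℝ (fun z => Real.log (phiFn d π₁ t z)) y) x ∧
    ∀ i j : Fin d,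
      fderiv ℝ (fun y => fderiv ℝ (fun z => Real.log (phiFn d π₁ t z)) y) x
          (EuclideanSpace.single i 1) (EuclideanSpace.single j 1)
        = ((-(1 / (1 - t ^ 2))) • (1 : Matrix (Fin d) (Fin d) ℝ)
            + (t ^ 2 / (1 - t ^ 2) ^ 2) • covMat d π₁ t x) i j :=
  hessian_log_phi_general d π₁ hsupp t ht x
end

section
/- Let 0 ≤ T < 1. For every t ∈ [0,T] and every x ∈ ℝ^d, the conditional covariance satisfies 0 ⪯ Cov_t(x) ⪯ d·I_d in the positive-semidefinite order, and consequently the Jacobian ∇_x v*(x, t) = (t/(1−t²)²) Cov_t(x) − (t/(1−t²)) I_d has operator norm at most T d/(1−T²)², i.e. sup_{t ∈ [0,T]} sup_{x ∈ ℝ^d} ‖∇_x v*(x, t)‖_op ≤ T d/(1−T²)². -/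
open MeasureTheory

/-!
Conditioned on `x`, the law of `x₁` is `π₁` tilted by `log g_t(x, ·)`; `m_t(x)`, `M_t(x)` and
`Cov_t(x)` are its mean, second moment and covariance matrix. Hence `uᵀ Cov_t(x) u` is the variance
of `⟪u, x₁⟫` under this posterior, which is nonnegative and at most `E⟪u, x₁⟫² ≤ d ‖u‖²` because the
posterior still lives on `[0,1]^d`. The Jacobian `a Cov_t(x) - b I` with `a, b ≥ 0` is then
symmetric with Rayleigh quotients in `[-b, a d - b]`, so its operator norm is at most
`max b (a d - b) ≤ a d ≤ T d / (1 - T²)²`.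
-/

open ProbabilityTheory Matrix

section OperatorNorm

open RCLike

theorem ContinuousLinearMap.norm_le_of_abs_re_inner_self_le {𝕜 E : Type*} [RCLike 𝕜]
    [NormedAddCommGroup E] [InnerProductSpace 𝕜 E] {T : E →L[𝕜] E}
    (hT : (T : E →ₗ[𝕜] E).IsSymmetric) {c : ℝ} (hc : 0 ≤ c)
    (h : ∀ x, |re (inner 𝕜 (T x) x)| ≤ c * ‖x‖ ^ 2) : ‖T‖ ≤ c := by
  rw [T.norm_eq_iSup_rayleighQuotient hT]
  refine ciSup_le fun x => ?_
  rcases eq_or_ne x 0 with rfl | hx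
  · simpa using hc
  · rw [rayleighQuotient, reApplyInnerSelf_apply, abs_div, abs_sq, div_le_iff₀ (by positivity)]
    exact h x

open RealInnerProductSpace in
theorem ContinuousLinearMap.norm_smul_sub_smul_one_le {E : Type*}
    [NormedAddCommGroup E] [InnerProductSpace ℝ E] {S : E →L[ℝ] E} {a c : ℝ}
    (hS : 0 ≤ S) (hSc : S ≤ c • 1) (ha : 0 ≤ a) (b : ℝ) :
    ‖a • S - b • 1‖ ≤ max |b| |a * c - b| := by
  rw [nonneg_iff_isPositive] at hS
  rw [le_def] at hSc
  refine norm_le_of_abs_re_inner_self_le ?_ (le_max_of_le_left (abs_nonneg b)) fun x => ?_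
  · intro x y
    simp only [toLinearMap_sub, toLinearMap_smul, toLinearMap_one, LinearMap.sub_apply,
      LinearMap.smul_apply, coe_coe, Module.End.one_apply, inner_sub_left, inner_sub_right,
      real_inner_smul_left, real_inner_smul_right, hS.inner_left_eq_inner_right x y]
  · have hSx := hS.re_inner_nonneg_left x
    have hSxc := hSc.re_inner_nonneg_left x
    simp only [re_to_real, _root_.sub_apply, _root_.smul_apply, one_apply_eq_self,
      inner_sub_left, inner_smul_left, real_inner_self_eq_norm_sq, conj_trivial,
      sub_nonneg] at hSx hSxc ⊢
    have haSx := mul_le_mul_of_nonneg_left hSxc ha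
    calc |a * ⟪S x, x⟫ - b * ‖x‖ ^ 2| ≤ max |-b * ‖x‖ ^ 2| |(a * c - b) * ‖x‖ ^ 2| := by
          apply abs_le_max_abs_abs <;> nlinarith [mul_nonneg ha hSx]
      _ = max |b| |a * c - b| * ‖x‖ ^ 2 := by
          rw [abs_mul, abs_mul, abs_neg, abs_sq, max_mul_of_nonneg _ _ (sq_nonneg _)]

open ComplexOrder in
theorem Matrix.isPositive_toEuclideanCLM_iff {n 𝕜 : Type*} [RCLike 𝕜] [Fintype n]
    [DecidableEq n] {A : Matrix n n 𝕜} :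
    (toEuclideanCLM (n := n) (𝕜 := 𝕜) A).IsPositive ↔ A.PosSemidef := by
  rw [← ContinuousLinearMap.isPositive_toLinearMap_iff, coe_toEuclideanCLM_eq_toEuclideanLin,
    isPositive_toEuclideanLin_iff]

theorem Matrix.norm_toEuclideanLin_smul_sub_smul_one_apply_le {n : Type*} [Fintype n]
    [DecidableEq n] {C : Matrix n n ℝ} {a c : ℝ} (hC : C.PosSemidef)
    (hCc : (c • 1 - C).PosSemidef) (ha : 0 ≤ a) (b : ℝ) (u : EuclideanSpace ℝ n) :
    ‖toEuclideanLin (a • C - b • 1) u‖ ≤ max |b| |a * c - b| * ‖u‖ := by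
  have hS : 0 ≤ toEuclideanCLM (n := n) (𝕜 := ℝ) C :=
    (ContinuousLinearMap.nonneg_iff_isPositive _).mpr (isPositive_toEuclideanCLM_iff.mpr hC)
  have hSc : toEuclideanCLM (n := n) (𝕜 := ℝ) C ≤ c • 1 := by
    rw [ContinuousLinearMap.le_def, ← map_one (toEuclideanCLM (n := n) (𝕜 := ℝ)), ← map_smul,
      ← map_sub]
    exact isPositive_toEuclideanCLM_iff.mpr hCc
  calc ‖toEuclideanLin (a • C - b • 1) u‖
      = ‖toEuclideanCLM (n := n) (𝕜 := ℝ) (a • C - b • 1) u‖ := rfl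
    _ ≤ ‖toEuclideanCLM (n := n) (𝕜 := ℝ) (a • C - b • 1)‖ * ‖u‖ :=
        ContinuousLinearMap.le_opNorm _ _
    _ ≤ max |b| |a * c - b| * ‖u‖ := by
        rw [map_sub, map_smul, map_smul, map_one]
        gcongr
        exact ContinuousLinearMap.norm_smul_sub_smul_one_le hS hSc ha b

end OperatorNorm

section CovarianceMatrix

variable {Ω ι : Type*} {mΩ : MeasurableSpace Ω} [Fintype ι]

noncomputable def covarianceMatrix (X : ι → Ω → ℝ) (μ : Measure Ω) : Matrix ι ι ℝ :=
  Matrix.of fun i j => cov[X i, X j; μ]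

variable {X : ι → Ω → ℝ} {μ : Measure Ω}

theorem dotProduct_covarianceMatrix_mulVec [IsFiniteMeasure μ] (hX : ∀ i, MemLp (X i) 2 μ)
    (u : ι → ℝ) :
    u ⬝ᵥ covarianceMatrix X μ *ᵥ u = Var[fun ω => ∑ i, u i * X i ω; μ] := by
  have hXu : ∀ i, MemLp (fun ω => u i * X i ω) 2 μ := fun i => (hX i).const_mul _
  rw [← covariance_self (memLp_finsetSum _ fun i _ => hXu i).aemeasurable,
    covariance_fun_sum_fun_sum hXu hXu]
  simp only [covariance_const_mul_left, covariance_const_mul_right, dotProduct, mulVec,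
    covarianceMatrix, of_apply, Finset.mul_sum]
  exact Finset.sum_congr rfl fun i _ => Finset.sum_congr rfl fun j _ => by ring

theorem posSemidef_covarianceMatrix [IsFiniteMeasure μ] (hX : ∀ i, MemLp (X i) 2 μ) :
    (covarianceMatrix X μ).PosSemidef := by
  refine posSemidef_iff_dotProduct_mulVec.mpr ⟨?_, fun u => ?_⟩
  · ext i j
    exact covariance_comm _ _
  · rw [star_trivial, dotProduct_covarianceMatrix_mulVec hX]
    exact variance_nonneg _ _

theorem posSemidef_smul_one_sub_covarianceMatrix [DecidableEq ι] [IsProbabilityMeasure μ]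
    (hX : ∀ i, MemLp (X i) 2 μ) {c : ℝ} (hc : ∀ᵐ ω ∂μ, ∑ i, X i ω ^ 2 ≤ c) :
    (c • 1 - covarianceMatrix X μ).PosSemidef := by
  refine posSemidef_iff_dotProduct_mulVec.mpr ⟨?_, fun u => ?_⟩
  · exact (isHermitian_one.smul (IsSelfAdjoint.all c)).sub
      (posSemidef_covarianceMatrix hX).isHermitian
  · have hY : MemLp (fun ω => ∑ i, u i * X i ω) 2 μ :=
      memLp_finsetSum _ fun i _ => (hX i).const_mul _
    have hsq : ∀ᵐ ω ∂μ, (∑ i, u i * X i ω) ^ 2 ≤ (u ⬝ᵥ u) * c := by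
      filter_upwards [hc] with ω hω
      calc (∑ i, u i * X i ω) ^ 2 ≤ (∑ i, u i ^ 2) * ∑ i, X i ω ^ 2 :=
            Finset.sum_mul_sq_le_sq_mul_sq _ _ _
        _ ≤ (u ⬝ᵥ u) * c := by
            simp only [dotProduct, ← sq]
            gcongr
    have hvar : Var[fun ω => ∑ i, u i * X i ω; μ] ≤ (u ⬝ᵥ u) * c :=
      calc Var[fun ω => ∑ i, u i * X i ω; μ] ≤ ∫ ω, (∑ i, u i * X i ω) ^ 2 ∂μ :=
            variance_le_expectation_sq hY.aestronglyMeasurable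
        _ ≤ ∫ _, (u ⬝ᵥ u) * c ∂μ := integral_mono_ae hY.integrable_sq (integrable_const _) hsq
        _ = (u ⬝ᵥ u) * c := by simp
    rw [star_trivial, sub_mulVec, dotProduct_sub, smul_mulVec, one_mulVec, dotProduct_smul,
      smul_eq_mul, dotProduct_covarianceMatrix_mulVec hX]
    linarith

end CovarianceMatrix

section Cube

variable {ι : Type*} [Fintype ι]

theorem sum_sq_le_card_of_mem_Icc {y : ι → ℝ} (hy : ∀ i, y i ∈ Set.Icc (0 : ℝ) 1) :
    ∑ i, y i ^ 2 ≤ Fintype.card ι := by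
  calc ∑ i, y i ^ 2 ≤ ∑ _i : ι, (1 : ℝ) :=
        Finset.sum_le_sum fun i _ => pow_le_one₀ (hy i).1 (hy i).2
    _ = Fintype.card ι := by simp

theorem memLp_eval_of_ae_mem_Icc {ν : Measure (EuclideanSpace ℝ ι)} [IsFiniteMeasure ν]
    (hν : ∀ᵐ y ∂ν, ∀ i, y i ∈ Set.Icc (0 : ℝ) 1) (p : ENNReal) (i : ι) :
    MemLp (fun y => y i) p ν := by
  refine MemLp.of_bound (by fun_prop) 1 ?_
  filter_upwards [hν] with y hy
  rw [Real.norm_eq_abs, abs_of_nonneg (hy i).1]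
  exact (hy i).2

end Cube

section Posterior

variable (d : ℕ) (π₁ : Measure (EuclideanSpace ℝ (Fin d))) (t : ℝ) (x : EuclideanSpace ℝ (Fin d))

noncomputable def posteriorMeasure : Measure (EuclideanSpace ℝ (Fin d)) :=
  π₁.tilted fun x₁ => -‖x - t • x₁‖ ^ 2 / (2 * (1 - t ^ 2))

theorem integral_posteriorMeasure {F : Type*} [NormedAddCommGroup F] [NormedSpace ℝ F]
    (f : EuclideanSpace ℝ (Fin d) → F) :
    ∫ x₁, f x₁ ∂posteriorMeasure d π₁ t x
      = (phiFn d π₁ t x)⁻¹ • ∫ x₁, gKer d t x x₁ • f x₁ ∂π₁ := by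
  rw [posteriorMeasure, integral_tilted, ← integral_smul]
  congr with x₁
  rw [smul_smul, div_eq_inv_mul]
  rfl

theorem mFn_eq_integral_posteriorMeasure : mFn d π₁ t x = ∫ x₁, x₁ ∂posteriorMeasure d π₁ t x :=
  (integral_posteriorMeasure d π₁ t x id).symm

theorem MMat_eq_integral_posteriorMeasure :
    MMat d π₁ t x = Matrix.of fun i j => ∫ x₁, x₁ i * x₁ j ∂posteriorMeasure d π₁ t x := by
  ext i j
  rw [of_apply, integral_posteriorMeasure]
  rfl

variable {d t}

theorem integrable_gKer [IsFiniteMeasure π₁] (ht : t ^ 2 < 1) : Integrable (gKer d t x) π₁ := by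
  refine Integrable.of_bound (by unfold gKer; fun_prop) 1 (ae_of_all _ fun x₁ => ?_)
  rw [gKer, Real.norm_eq_abs, Real.abs_exp, Real.exp_le_one_iff]
  exact div_nonpos_of_nonpos_of_nonneg (neg_nonpos.mpr (sq_nonneg _)) (by linarith)

theorem isProbabilityMeasure_posteriorMeasure [IsProbabilityMeasure π₁] (ht : t ^ 2 < 1) :
    IsProbabilityMeasure (posteriorMeasure d π₁ t x) :=
  isProbabilityMeasure_tilted (integrable_gKer π₁ x ht)

theorem ae_posteriorMeasure_of_ae {p : EuclideanSpace ℝ (Fin d) → Prop}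
    (hp : ∀ᵐ x₁ ∂π₁, p x₁) : ∀ᵐ x₁ ∂posteriorMeasure d π₁ t x, p x₁ :=
  (tilted_absolutelyContinuous _ _).ae_le hp

variable [IsProbabilityMeasure π₁] (ht : t ^ 2 < 1)
  (hsupp : ∀ᵐ x₁ ∂π₁, ∀ i, x₁ i ∈ Set.Icc (0 : ℝ) 1)
include ht hsupp

theorem covMat_eq_covarianceMatrix :
    covMat d π₁ t x = covarianceMatrix (fun i x₁ => x₁ i) (posteriorMeasure d π₁ t x) := by
  have := isProbabilityMeasure_posteriorMeasure π₁ x ht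
  have hX := memLp_eval_of_ae_mem_Icc (ae_posteriorMeasure_of_ae (t := t) π₁ x hsupp)
  ext i j
  rw [covMat, MMat_eq_integral_posteriorMeasure, mFn_eq_integral_posteriorMeasure,
    covarianceMatrix, of_apply, covariance_eq_sub (hX 2 i) (hX 2 j), Matrix.sub_apply, of_apply,
    of_apply, eval_integral_piLp (fun k => (hX 1 k).integrable le_rfl),
    eval_integral_piLp (fun k => (hX 1 k).integrable le_rfl)]
  rfl

theorem posSemidef_covMat : (covMat d π₁ t x).PosSemidef := by
  have := isProbabilityMeasure_posteriorMeasure π₁ x ht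
  rw [covMat_eq_covarianceMatrix π₁ x ht hsupp]
  exact posSemidef_covarianceMatrix
    (memLp_eval_of_ae_mem_Icc (ae_posteriorMeasure_of_ae (t := t) π₁ x hsupp) 2)

theorem posSemidef_natCast_smul_one_sub_covMat :
    ((d : ℝ) • 1 - covMat d π₁ t x).PosSemidef := by
  have := isProbabilityMeasure_posteriorMeasure π₁ x ht
  rw [covMat_eq_covarianceMatrix π₁ x ht hsupp]
  refine posSemidef_smul_one_sub_covarianceMatrix
    (memLp_eval_of_ae_mem_Icc (ae_posteriorMeasure_of_ae (t := t) π₁ x hsupp) 2) ?_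
  filter_upwards [ae_posteriorMeasure_of_ae (t := t) π₁ x hsupp] with x₁ hx₁
  simpa using sum_sq_le_card_of_mem_Icc hx₁

end Posterior

theorem max_abs_jacobian_coeffs_le {d t T : ℝ} (hd : 1 ≤ d) (ht0 : 0 ≤ t) (htT : t ≤ T)
    (hT1 : T < 1) :
    max |t / (1 - t ^ 2)| |t / (1 - t ^ 2) ^ 2 * d - t / (1 - t ^ 2)|
      ≤ T * d / (1 - T ^ 2) ^ 2 := by
  have hS : 0 < 1 - T ^ 2 := by nlinarith
  have hs : 0 < 1 - t ^ 2 := by nlinarith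
  have hb : 0 ≤ t / (1 - t ^ 2) := by positivity
  have hba : t / (1 - t ^ 2) ≤ t / (1 - t ^ 2) ^ 2 * d :=
    calc t / (1 - t ^ 2) = t / (1 - t ^ 2) ^ 2 * (1 - t ^ 2) := by field_simp
      _ ≤ t / (1 - t ^ 2) ^ 2 * d := by gcongr; nlinarith
  have had : t / (1 - t ^ 2) ^ 2 * d ≤ T * d / (1 - T ^ 2) ^ 2 := by
    rw [mul_div_right_comm]
    gcongr
    nlinarith
  rw [abs_of_nonneg hb, abs_of_nonneg (sub_nonneg.mpr hba)]
  exact max_le (hba.trans had) ((sub_le_self _ hb).trans had)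

theorem covariance_psd_and_jacobian_opnorm_bound_general
    (d : ℕ) (hd : 1 ≤ d)
    (π₁ : Measure (EuclideanSpace ℝ (Fin d))) [IsProbabilityMeasure π₁]
    (hsupp : ∀ᵐ x₁ ∂π₁, ∀ i, x₁ i ∈ Set.Icc (0 : ℝ) 1)
    (T : ℝ) (hT1 : T < 1)
    (t : ℝ) (ht : t ∈ Set.Icc (0 : ℝ) T) (x : EuclideanSpace ℝ (Fin d)) :
    (covMat d π₁ t x).PosSemidef ∧
    ((d : ℝ) • (1 : Matrix (Fin d) (Fin d) ℝ) - covMat d π₁ t x).PosSemidef ∧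
    ∀ u : EuclideanSpace ℝ (Fin d), ‖u‖ ≤ 1 →
      ‖Matrix.toEuclideanLin
          ((t / (1 - t ^ 2) ^ 2) • covMat d π₁ t x
            - (t / (1 - t ^ 2)) • (1 : Matrix (Fin d) (Fin d) ℝ)) u‖
        ≤ T * d / (1 - T ^ 2) ^ 2 := by
  obtain ⟨ht0, htT⟩ := ht
  have ht2 : t ^ 2 < 1 := by nlinarith
  have hC := posSemidef_covMat π₁ x ht2 hsupp
  have hdC := posSemidef_natCast_smul_one_sub_covMat π₁ x ht2 hsupp
  refine ⟨hC, hdC, fun u hu => ?_⟩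
  calc _ ≤ max |t / (1 - t ^ 2)| |t / (1 - t ^ 2) ^ 2 * d - t / (1 - t ^ 2)| * ‖u‖ :=
        norm_toEuclideanLin_smul_sub_smul_one_apply_le hC hdC (by positivity) _ u
    _ ≤ max |t / (1 - t ^ 2)| |t / (1 - t ^ 2) ^ 2 * d - t / (1 - t ^ 2)| :=
        mul_le_of_le_one_right (le_max_of_le_left (abs_nonneg _)) hu
    _ ≤ T * d / (1 - T ^ 2) ^ 2 :=
        max_abs_jacobian_coeffs_le (by exact_mod_cast hd) ht0 htT hT1

/-- For `0 ≤ T < 1`, every `t ∈ [0,T]` and every `x ∈ ℝ^d`: the conditional covariance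
satisfies `0 ⪯ Cov_t(x) ⪯ d·I_d`, and consequently the Jacobian
`∇ₓ v*(x,t) = (t/(1-t²)²) Cov_t(x) - (t/(1-t²)) I_d` has operator norm at most
`T d/(1-T²)²` (operator norm expressed as `sup_{‖u‖ ≤ 1} ‖A u‖`). -/
theorem covariance_psd_and_jacobian_opnorm_bound
    (d : ℕ) (hd : 1 ≤ d)
    (π₁ : Measure (EuclideanSpace ℝ (Fin d))) [IsProbabilityMeasure π₁]
    (hsupp : ∀ᵐ x₁ ∂π₁, ∀ i, x₁ i ∈ Set.Icc (0 : ℝ) 1)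
    (T : ℝ) (hT0 : 0 ≤ T) (hT1 : T < 1)
    (t : ℝ) (ht : t ∈ Set.Icc (0 : ℝ) T) (x : EuclideanSpace ℝ (Fin d)) :
    (covMat d π₁ t x).PosSemidef ∧
    ((d : ℝ) • (1 : Matrix (Fin d) (Fin d) ℝ) - covMat d π₁ t x).PosSemidef ∧
    ∀ u : EuclideanSpace ℝ (Fin d), ‖u‖ ≤ 1 →
      ‖Matrix.toEuclideanLin
          ((t / (1 - t ^ 2) ^ 2) • covMat d π₁ t x
            - (t / (1 - t ^ 2)) • (1 : Matrix (Fin d) (Fin d) ℝ)) u‖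
        ≤ T * d / (1 - T ^ 2) ^ 2 :=
  covariance_psd_and_jacobian_opnorm_bound_general d hd π₁ hsupp T hT1 t ht x
end
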